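/- arXiv:2312.08751 — 5 statements merged into one kernel-verified Lean document; each statement's English description precedes it below -/
import Mathlib

section
/- Let n, m be positive integers and let g : ℝ^n → ℝ^m be l∞ 1-Lipschitz, i.e. ‖g(x)−g(y)‖∞ ≤ ‖x−y‖∞ for all x, y ∈ ℝ^n. Fix s ∈ ℝ^n and let a* be an index such that g(s)_{a*} ≥ g(s)_j for all j, and let margin(g,s) = g(s)_{a*} − max_{j ≠ a*} g(s)_j be the difference between the largest and second-largest coordinates of g(s). Then for every ŝ ∈ ℝ^n with ‖ŝ − s‖∞ ≤ margin(g,s)/2, one has g(ŝ)_{a*} ≥ g(ŝ)_j for all j, i.e. the index a* remains a maximizer of g(ŝ). -/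
/-- If `g : ℝⁿ → ℝᵐ` is `l∞` 1-Lipschitz, `a` is a maximizer of `g s`,
and `margin` is the gap between the largest and second-largest coordinates of `g s`,
then for every `shat` with `‖shat - s‖∞ ≤ margin / 2`, the index `a` remains a maximizer
of `g shat`. (Norm on `Fin k → ℝ` is the sup norm.) -/
theorem sortrl_margin_maximizer_stable
    (n m : ℕ) (hn : 0 < n) (hm : 1 < m)
    (g : (Fin n → ℝ) → (Fin m → ℝ))
    (hg : ∀ x y, ‖g x - g y‖ ≤ ‖x - y‖)
    (s : Fin n → ℝ) (a : Fin m)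
    (ha : ∀ j, g s j ≤ g s a)
    (margin : ℝ)
    (hmargin : margin = g s a -
      (Finset.univ.erase a).sup'
        (by
          rw [← Finset.card_pos, Finset.card_erase_of_mem (Finset.mem_univ a),
            Finset.card_univ, Fintype.card_fin]
          omega)
        (g s))
    (shat : Fin n → ℝ) (hshat : ‖shat - s‖ ≤ margin / 2) :
    ∀ j, g shat j ≤ g shat a := by
  intro j
  have hbound : ∀ i, |g shat i - g s i| ≤ margin / 2 := by
    intro i
    have h1 : |g shat i - g s i| ≤ ‖g shat - g s‖ := by
      have := norm_le_pi_norm (g shat - g s) i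
      simpa [Real.norm_eq_abs] using this
    exact h1.trans ((hg shat s).trans hshat)
  by_cases hja : j = a
  · subst hja; exact le_refl _
  · have hj : j ∈ Finset.univ.erase a := Finset.mem_erase.2 ⟨hja, Finset.mem_univ j⟩
    have hsup : g s j ≤ g s a - margin := by
      rw [hmargin]
      have := Finset.le_sup' (g s) hj
      linarith
    have h1 := abs_le.1 (hbound j)
    have h2 := abs_le.1 (hbound a)
    linarith
end

section
/- Let n be a positive integer, m ≥ 2, and let g : ℝ^n → ℝ^m be l∞ 1-Lipschitz. Fix s ∈ ℝ^n and let a* be an index such that g(s)_{a*} ≥ g(s)_j for all j, and let margin(g,s) = g(s)_{a*} − max_{j ≠ a*} g(s)_j. Then for every s' ∈ ℝ^n for which a* is not a maximizer of g(s') (i.e. there exists j with g(s')_j > g(s')_{a*}), one has ‖s' − s‖∞ ≥ margin(g,s)/2; consequently the robust radius R(g,s) := inf{‖s' − s‖∞ : a* is not a maximizer of g(s')} satisfies R(g,s) ≥ margin(g,s)/2. -/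
/-!
Moving the input by `δ` in `l∞` moves every logit by at most `δ`, so the gap
`g a - g j` between the top class `a` and any rival `j` shrinks by at most `2δ`.
That gap starts out at least `margin` and must become negative for `j` to overtake `a`,
so `margin < 2δ`.
-/

theorem Pi.sub_sub_sub_le_two_mul_norm {ι : Type*} [Fintype ι] (u v : ι → ℝ) (i j : ι) :
    (u i - u j) - (v i - v j) ≤ 2 * ‖u - v‖ := by
  have hcoord : ∀ k, |u k - v k| ≤ ‖u - v‖ := fun k => by
    simpa only [Pi.sub_apply, Real.norm_eq_abs] using norm_le_pi_norm (u - v) k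
  linarith [(abs_le.mp (hcoord i)).2, (abs_le.mp (hcoord j)).1]

theorem lt_two_mul_norm_of_overtaken {E ι : Type*} [SeminormedAddCommGroup E] [Fintype ι]
    {g : E → ι → ℝ} (hg : ∀ x y, ‖g x - g y‖ ≤ ‖x - y‖) {x y : E} {a j : ι}
    (hj : g y a < g y j) : g x a - g x j < 2 * ‖y - x‖ :=
  calc g x a - g x j ≤ (g y a - g y j) + 2 * ‖g x - g y‖ := by
        linarith [Pi.sub_sub_sub_le_two_mul_norm (g x) (g y) a j]
    _ < 2 * ‖g x - g y‖ := by linarith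
    _ ≤ 2 * ‖y - x‖ := by rw [norm_sub_rev y x]; linarith [hg x y]

/-- If `g : ℝⁿ → ℝᵐ` is `l∞` 1-Lipschitz, `a` is a maximizer of `g s`,
and `margin` is the gap between the largest and second-largest coordinates of `g s`,
then every `s'` at which `a` is not a maximizer of `g s'` satisfies
`margin / 2 ≤ ‖s' - s‖∞`; consequently the robust radius (the infimum, in `ENNReal`,
of `‖s' - s‖∞` over such `s'`, which is `+∞` if no such `s'` exists) is at least
`margin / 2`. -/
theorem sortrl_robust_radius_ge_half_margin
    (n m : ℕ) (hm : 2 ≤ m)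
    (g : (Fin n → ℝ) → (Fin m → ℝ))
    (hg : ∀ x y, ‖g x - g y‖ ≤ ‖x - y‖)
    (s : Fin n → ℝ) (a : Fin m)
    (margin : ℝ)
    (hmargin : margin = g s a -
      (Finset.univ.erase a).sup'
        (by
          rw [← Finset.card_pos, Finset.card_erase_of_mem (Finset.mem_univ a),
            Finset.card_univ, Fintype.card_fin]
          omega)
        (g s)) :
    (∀ s' : Fin n → ℝ, (∃ j, g s' a < g s' j) → margin / 2 ≤ ‖s' - s‖) ∧
    ENNReal.ofReal (margin / 2) ≤
      ⨅ s' ∈ {s' : Fin n → ℝ | ∃ j, g s' a < g s' j}, (‖s' - s‖₊ : ENNReal) := by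
  have half_margin_le : ∀ s' : Fin n → ℝ, (∃ j, g s' a < g s' j) → margin / 2 ≤ ‖s' - s‖ := by
    rintro s' ⟨j, hj⟩
    have hja : j ≠ a := by rintro rfl; exact lt_irrefl _ hj
    have hrival : g s j ≤ (Finset.univ.erase a).sup' _ (g s) :=
      Finset.le_sup' (g s) (Finset.mem_erase.mpr ⟨hja, Finset.mem_univ j⟩)
    linarith [lt_two_mul_norm_of_overtaken hg (x := s) hj]
  refine ⟨half_margin_le, le_iInf₂ fun s' hs' => ?_⟩
  exact (ENNReal.ofReal_le_ofReal (half_margin_le s' hs')).trans_eq (ofReal_norm _)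
end

section
/- Fix ρ ∈ [0,1), positive integers d and d', and for each k with 1 ≤ k ≤ d' a bias vector b^{(k)} ∈ ℝ^d. Define the SortNet layer L : ℝ^d → ℝ^{d'} by L(x)_k = ∑_{i=1}^d (1−ρ)ρ^{i−1}·sort(|x + b^{(k)}|)_i, where |x + b^{(k)}| is taken componentwise and sort(v)_i denotes the i-th largest entry of v. Then L is l∞ 1-Lipschitz: for all x, y ∈ ℝ^d, ‖L(x) − L(y)‖∞ ≤ ‖x − y‖∞. -/
/-- `sortDesc x i` is the `(i+1)`-th largest entry of `x` (entries arranged in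
nonincreasing order). -/
noncomputable def sortDesc {d : ℕ} (x : Fin d → ℝ) : Fin d → ℝ :=
  fun i => x (Tuple.sort x i.rev)

lemma sortDesc_le_of_le {d : ℕ} (u v : Fin d → ℝ) (ε : ℝ)
    (h : ∀ j, u j ≤ v j + ε) (i : Fin d) :
    sortDesc u i ≤ sortDesc v i + ε := by
  set σu := Tuple.sort u with hσu
  set σv := Tuple.sort v with hσv
  set c := sortDesc u i with hc
  set T : Finset (Fin d) := Finset.univ.filter (fun p => c - ε ≤ v (σv p)) with hT
  have hsub : (Finset.Ici i.rev).image (fun q => σv.symm (σu q)) ⊆ T := by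
    intro p hp
    simp only [Finset.mem_image] at hp
    obtain ⟨q, hq, rfl⟩ := hp
    simp only [hT, Finset.mem_filter, Finset.mem_univ, true_and,
      Equiv.apply_symm_apply]
    have h1 : c ≤ u (σu q) := Tuple.monotone_sort u (Finset.mem_Ici.mp hq)
    have h2 := h (σu q)
    linarith
  have hcardT : (i : ℕ) + 1 ≤ T.card := by
    have hinj : Function.Injective (fun q => σv.symm (σu q)) :=
      fun a b hab => σu.injective (σv.symm.injective hab)
    have h1 : ((Finset.Ici i.rev).image (fun q => σv.symm (σu q))).card
        = (Finset.Ici i.rev).card := Finset.card_image_of_injective _ hinj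
    have h2 : (Finset.Ici i.rev).card = d - (i.rev : ℕ) := Fin.card_Ici _
    have h3 : (i.rev : ℕ) = d - (i + 1) := Fin.val_rev i
    have h4 := Finset.card_le_card hsub
    have := i.isLt
    omega
  have hex : ∃ p ∈ T, p ≤ i.rev := by
    by_contra hcon
    push_neg at hcon
    have hsub2 : T ⊆ Finset.Ioi i.rev := fun p hp => Finset.mem_Ioi.mpr (hcon p hp)
    have h4 := Finset.card_le_card hsub2
    have h5 : (Finset.Ioi i.rev).card = d - 1 - (i.rev : ℕ) := Fin.card_Ioi _
    have h3 : (i.rev : ℕ) = d - (i + 1) := Fin.val_rev i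
    have := i.isLt
    omega
  obtain ⟨p, hpT, hple⟩ := hex
  have hmono : v (σv p) ≤ v (σv i.rev) := Tuple.monotone_sort v hple
  have hpT' : c - ε ≤ v (σv p) := by
    simpa [hT] using hpT
  have : sortDesc v i = v (σv i.rev) := rfl
  linarith

/-- A SortNet layer `L(x)_k = ∑_i (1−ρ)ρ^i · sort(|x + b k|)_i`
(with geometric weights `w_{i+1} = (1−ρ)ρ^i`, `i` 0-indexed, and componentwise
absolute value) is `l∞` 1-Lipschitz. (Norm on `Fin k → ℝ` is the sup norm.) -/
theorem sortNet_layer_linf_one_lipschitz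
    (ρ : ℝ) (hρ0 : 0 ≤ ρ) (hρ1 : ρ < 1)
    (d d' : ℕ) (hd : 0 < d) (hd' : 0 < d')
    (b : Fin d' → Fin d → ℝ)
    (L : (Fin d → ℝ) → (Fin d' → ℝ))
    (hL : ∀ x k, L x k = ∑ i : Fin d,
      (1 - ρ) * ρ ^ (i : ℕ) * sortDesc (fun j => |x j + b k j|) i) :
    ∀ x y, ‖L x - L y‖ ≤ ‖x - y‖ := by
  intro x y
  have hnn : (0:ℝ) ≤ ‖x - y‖ := norm_nonneg _
  rw [pi_norm_le_iff_of_nonneg hnn]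
  intro k
  set ε := ‖x - y‖ with hε
  set u : Fin d → ℝ := fun j => |x j + b k j| with hu
  set v : Fin d → ℝ := fun j => |y j + b k j| with hv
  have hptwise : ∀ j, |u j - v j| ≤ ε := by
    intro j
    have h1 : |u j - v j| ≤ |(x j + b k j) - (y j + b k j)| :=
      abs_abs_sub_abs_le_abs_sub _ _
    have h2 : (x j + b k j) - (y j + b k j) = (x - y) j := by
      rw [Pi.sub_apply]; ring
    have h3 : ‖(x - y) j‖ ≤ ε := norm_le_pi_norm (x - y) j
    rw [h2] at h1
    simpa [Real.norm_eq_abs] using h1.trans h3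
  have huv : ∀ j, u j ≤ v j + ε := by
    intro j
    have := hptwise j
    rw [abs_sub_le_iff] at this
    linarith [this.1]
  have hvu : ∀ j, v j ≤ u j + ε := by
    intro j
    have := hptwise j
    rw [abs_sub_le_iff] at this
    linarith [this.2]
  have hkey : ∀ i, |sortDesc u i - sortDesc v i| ≤ ε := by
    intro i
    rw [abs_sub_le_iff]
    exact ⟨by linarith [sortDesc_le_of_le u v ε huv i],
           by linarith [sortDesc_le_of_le v u ε hvu i]⟩
  have hLk : (L x - L y) k = ∑ i : Fin d,
      (1 - ρ) * ρ ^ (i : ℕ) * (sortDesc u i - sortDesc v i) := by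
    simp only [Pi.sub_apply, hL x k, hL y k, ← Finset.sum_sub_distrib]
    exact Finset.sum_congr rfl fun i _ => by ring
  rw [Real.norm_eq_abs, hLk]
  calc |∑ i : Fin d, (1 - ρ) * ρ ^ (i : ℕ) * (sortDesc u i - sortDesc v i)|
      ≤ ∑ i : Fin d, |(1 - ρ) * ρ ^ (i : ℕ) * (sortDesc u i - sortDesc v i)| :=
        Finset.abs_sum_le_sum_abs _ _
    _ ≤ ∑ i : Fin d, (1 - ρ) * ρ ^ (i : ℕ) * ε := by
        apply Finset.sum_le_sum
        intro i _
        rw [abs_mul]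
        have hw : (0:ℝ) ≤ (1 - ρ) * ρ ^ (i : ℕ) :=
          mul_nonneg (by linarith) (pow_nonneg hρ0 _)
        rw [abs_of_nonneg hw]
        exact mul_le_mul_of_nonneg_left (hkey i) hw
    _ = (∑ i : Fin d, (1 - ρ) * ρ ^ (i : ℕ)) * ε := by
        rw [Finset.sum_mul]
    _ ≤ 1 * ε := by
        apply mul_le_mul_of_nonneg_right _ hnn
        rw [← Finset.mul_sum, Fin.sum_univ_eq_sum_range, geom_sum_eq (by linarith)]
        have hpd : (0:ℝ) ≤ ρ ^ d := pow_nonneg hρ0 d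
        have hne : ρ - 1 ≠ 0 := by linarith
        have heq : (1 - ρ) * ((ρ ^ d - 1) / (ρ - 1)) = 1 - ρ ^ d := by
          field_simp
          ring
        rw [heq]
        linarith
    _ = ε := one_mul ε
end

section
/- Fix ρ ∈ [0,1), a depth M ≥ 1, layer widths d_0, d_1, …, d_M, for each layer l (1 ≤ l ≤ M) and each unit k (1 ≤ k ≤ d_l) a bias vector b^{(l,k)} ∈ ℝ^{d_{l−1}}, and an output bias b^out ∈ ℝ^{d_M}. Define recursively x^{(0)}(s) = s ∈ ℝ^{d_0} and x^{(l)}(s)_k = ∑_{i=1}^{d_{l−1}} (1−ρ)ρ^{i−1}·sort(|x^{(l−1)}(s) + b^{(l,k)}|)_i, and set g(s) = −(x^{(M)}(s) + b^out). Then the score function g : ℝ^{d_0} → ℝ^{d_M} is l∞ 1-Lipschitz: ‖g(s_1) − g(s_2)‖∞ ≤ ‖s_1 − s_2‖∞ for all s_1, s_2 ∈ ℝ^{d_0}. -/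
open Finset

theorem sortDesc_antitone {d : ℕ} (x : Fin d → ℝ) : Antitone (sortDesc x) :=
  fun _ _ hij => Tuple.monotone_sort x (Fin.rev_le_rev.mpr hij)

theorem lt_card_le_iff_le_sortDesc {d : ℕ} (x : Fin d → ℝ) (a : ℝ) (i : Fin d) :
    (i : ℕ) < #{j | a ≤ x j} ↔ a ≤ sortDesc x i := by
  rw [← Tuple.lt_card_ge_iff_apply_ge_of_antitone (sortDesc_antitone x)]
  have e : {j // a ≤ sortDesc x j} ≃ {j // a ≤ x j} :=
    Equiv.subtypeEquiv (Fin.revPerm.trans (Tuple.sort x)) fun j => by simp [sortDesc]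
  simp only [← Fintype.card_subtype, Fintype.card_congr e]

theorem sortDesc_le_add_of_le_add {d : ℕ} {u v : Fin d → ℝ} {c : ℝ}
    (h : ∀ j, u j ≤ v j + c) (i : Fin d) : sortDesc u i ≤ sortDesc v i + c := by
  have hu : (i : ℕ) < #{j | sortDesc u i ≤ u j} :=
    (lt_card_le_iff_le_sortDesc u _ i).mpr le_rfl
  have hsub : #{j | sortDesc u i ≤ u j} ≤ #{j | sortDesc u i - c ≤ v j} :=
    card_le_card fun j hj => by
      simp only [mem_filter, mem_univ, true_and] at hj ⊢; linarith [h j]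
  linarith [(lt_card_le_iff_le_sortDesc v _ i).mp (hu.trans_le hsub)]

theorem lipschitzWith_one_sortDesc (d : ℕ) :
    LipschitzWith 1 (sortDesc : (Fin d → ℝ) → Fin d → ℝ) := by
  refine LipschitzWith.of_dist_le_mul fun u v => ?_
  rw [NNReal.coe_one, one_mul, dist_pi_le_iff dist_nonneg]
  have huv (j : Fin d) := abs_le.mp (dist_le_pi_dist u v j : |u j - v j| ≤ dist u v)
  intro i
  rw [Real.dist_eq, abs_sub_le_iff]
  constructor
  · have := sortDesc_le_add_of_le_add (u := u) (v := v) (fun j => by linarith [huv j]) i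
    linarith
  · have := sortDesc_le_add_of_le_add (u := v) (v := u) (fun j => by linarith [huv j]) i
    linarith

theorem LipschitzWith.pi {α ι : Type*} {β : ι → Type*} [PseudoMetricSpace α] [Fintype ι]
    [∀ i, PseudoMetricSpace (β i)] {K : NNReal} {f : α → ∀ i, β i}
    (hf : ∀ i, LipschitzWith K fun a => f a i) : LipschitzWith K f :=
  LipschitzWith.of_dist_le_mul fun x y =>
    (dist_pi_le_iff (by positivity)).2 fun i => (hf i).dist_le_mul x y

theorem lipschitzWith_one_abs_add {ι : Type*} [Fintype ι] (a : ι → ℝ) :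
    LipschitzWith 1 fun y : ι → ℝ => fun j => |y j + a j| :=
  LipschitzWith.pi fun j => LipschitzWith.of_dist_le_mul fun y z => by
    rw [NNReal.coe_one, one_mul, Real.dist_eq]
    calc |(|y j + a j| - |z j + a j|)| ≤ |y j + a j - (z j + a j)| :=
          abs_abs_sub_abs_le_abs_sub _ _
      _ = |y j - z j| := by ring_nf
      _ ≤ dist y z := dist_le_pi_dist y z j

theorem lipschitzWith_one_sum_mul {ι : Type*} [Fintype ι] {w : ι → ℝ} (hw : ∀ i, 0 ≤ w i)
    (hw1 : ∑ i, w i ≤ 1) : LipschitzWith 1 fun y : ι → ℝ => ∑ i, w i * y i := by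
  refine LipschitzWith.of_dist_le_mul fun y z => ?_
  rw [NNReal.coe_one, one_mul, Real.dist_eq, ← sum_sub_distrib]
  calc |∑ i, (w i * y i - w i * z i)|
      ≤ ∑ i, |w i * y i - w i * z i| := abs_sum_le_sum_abs _ _
    _ ≤ ∑ i, w i * dist y z := sum_le_sum fun i _ => by
        rw [← mul_sub, abs_mul, abs_of_nonneg (hw i)]
        exact mul_le_mul_of_nonneg_left (dist_le_pi_dist y z i) (hw i)
    _ = (∑ i, w i) * dist y z := (sum_mul _ _ _).symm
    _ ≤ dist y z := mul_le_of_le_one_left dist_nonneg hw1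

theorem Fin.sum_one_sub_mul_pow {R : Type*} [CommRing R] (ρ : R) (n : ℕ) :
    ∑ i : Fin n, (1 - ρ) * ρ ^ (i : ℕ) = 1 - ρ ^ n := by
  rw [← mul_sum, Fin.sum_univ_eq_sum_range (ρ ^ ·), mul_neg_geom_sum]

noncomputable def sortNetLayer (ρ : ℝ) {m n : ℕ} (b : Fin n → Fin m → ℝ) (y : Fin m → ℝ) :
    Fin n → ℝ :=
  fun k => ∑ i : Fin m, (1 - ρ) * ρ ^ (i : ℕ) * sortDesc (fun j => |y j + b k j|) i

theorem lipschitzWith_one_sortNetLayer {ρ : ℝ} (hρ0 : 0 ≤ ρ) (hρ1 : ρ < 1) {m n : ℕ}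
    (b : Fin n → Fin m → ℝ) : LipschitzWith 1 (sortNetLayer ρ b) := by
  have hpool :
      LipschitzWith 1 fun y : Fin m → ℝ => ∑ i : Fin m, (1 - ρ) * ρ ^ (i : ℕ) * y i :=
    lipschitzWith_one_sum_mul (fun i => mul_nonneg (by linarith) (pow_nonneg hρ0 _))
      (by rw [Fin.sum_one_sub_mul_pow]; linarith [pow_nonneg hρ0 m])
  refine LipschitzWith.pi fun k => ?_
  have h := hpool.comp ((lipschitzWith_one_sortDesc m).comp (lipschitzWith_one_abs_add (b k)))
  rwa [one_mul, one_mul] at h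

theorem sortNet_score_function_linf_one_lipschitz_general
    (ρ : ℝ) (hρ0 : 0 ≤ ρ) (hρ1 : ρ < 1)
    (M : ℕ)
    (d : ℕ → ℕ)
    (b : (l : ℕ) → Fin (d (l + 1)) → Fin (d l) → ℝ)
    (bout : Fin (d M) → ℝ)
    (x : (l : ℕ) → (Fin (d 0) → ℝ) → Fin (d l) → ℝ)
    (hx0 : ∀ s, x 0 s = s)
    (hxl : ∀ (l : ℕ) (s : Fin (d 0) → ℝ) (k : Fin (d (l + 1))),
      x (l + 1) s k = ∑ i : Fin (d l),
        (1 - ρ) * ρ ^ (i : ℕ) * sortDesc (fun j => |x l s j + b l k j|) i)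
    (g : (Fin (d 0) → ℝ) → Fin (d M) → ℝ)
    (hg : ∀ s, g s = -(x M s + bout)) :
    ∀ s₁ s₂ : Fin (d 0) → ℝ, ‖g s₁ - g s₂‖ ≤ ‖s₁ - s₂‖ := by
  have hx : ∀ l, LipschitzWith 1 (x l) := by
    intro l
    induction l with
    | zero => rw [show x 0 = id from funext hx0]; exact LipschitzWith.id
    | succ l ih =>
      have hstep : x (l + 1) = sortNetLayer ρ (b l) ∘ x l :=
        funext fun s => funext (hxl l s)
      simpa [hstep] using (lipschitzWith_one_sortNetLayer hρ0 hρ1 (b l)).comp ih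
  have hg1 : LipschitzWith 1 g := by
    refine LipschitzWith.of_dist_le_mul fun s₁ s₂ => ?_
    rw [hg, hg, dist_neg_neg, dist_add_right]
    exact (hx M).dist_le_mul s₁ s₂
  intro s₁ s₂
  simpa [dist_eq_norm] using hg1.dist_le_mul s₁ s₂

/-- An `M`-layer SortNet score function, built from layers
`x^{(l+1)}(s)_k = ∑_i (1−ρ)ρ^i · sort(|x^{(l)}(s) + b^{(l,k)}|)_i` on top of the
input `x^{(0)}(s) = s`, with output `g(s) = −(x^{(M)}(s) + b^out)`, is `l∞`
1-Lipschitz: `‖g s₁ − g s₂‖∞ ≤ ‖s₁ − s₂‖∞`. Here `b l k` is the bias vector of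
unit `k` of layer `l+1` (so layers `1 ≤ l+1 ≤ M`), and the norm on `Fin k → ℝ`
is the sup norm. -/
theorem sortNet_score_function_linf_one_lipschitz
    (ρ : ℝ) (hρ0 : 0 ≤ ρ) (hρ1 : ρ < 1)
    (M : ℕ) (hM : 1 ≤ M)
    (d : ℕ → ℕ) (hd : ∀ l, 0 < d l)
    (b : (l : ℕ) → Fin (d (l + 1)) → Fin (d l) → ℝ)
    (bout : Fin (d M) → ℝ)
    (x : (l : ℕ) → (Fin (d 0) → ℝ) → Fin (d l) → ℝ)
    (hx0 : ∀ s, x 0 s = s)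
    (hxl : ∀ (l : ℕ) (s : Fin (d 0) → ℝ) (k : Fin (d (l + 1))),
      x (l + 1) s k = ∑ i : Fin (d l),
        (1 - ρ) * ρ ^ (i : ℕ) * sortDesc (fun j => |x l s j + b l k j|) i)
    (g : (Fin (d 0) → ℝ) → Fin (d M) → ℝ)
    (hg : ∀ s, g s = -(x M s + bout)) :
    ∀ s₁ s₂ : Fin (d 0) → ℝ, ‖g s₁ - g s₂‖ ≤ ‖s₁ - s₂‖ :=
  sortNet_score_function_linf_one_lipschitz_general ρ hρ0 hρ1 M d b bout x hx0 hxl g hg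
end

section
/- The sorting map on ℝ^d is l∞ 1-Lipschitz: for all x, y ∈ ℝ^d, ‖sort(x) − sort(y)‖∞ ≤ ‖x − y‖∞, i.e. max_k |x_{[k]} − y_{[k]}| ≤ max_k |x_k − y_k|, where x_{[k]} denotes the k-th largest entry of x. -/
/-- Key one-sided estimate: if `x i - y i ≤ c` for all `i`, then the sorted
tuples satisfy the same bound entrywise. -/
lemma sortDesc_key {d : ℕ} (x y : Fin d → ℝ) (c : ℝ) (hc : ∀ i, x i - y i ≤ c) (k : Fin d) :
    sortDesc x k - sortDesc y k ≤ c := by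
  set σ := Tuple.sort x
  set τ := Tuple.sort y
  set A := (Finset.Ici k.rev).image σ
  set B := (Finset.Iic k.rev).image τ
  have hA : A.card = d - k.rev := by
    rw [Finset.card_image_of_injective _ σ.injective, Fin.card_Ici]
  have hB : B.card = k.rev + 1 := by
    rw [Finset.card_image_of_injective _ τ.injective, Fin.card_Iic]
  have hunion : (A ∪ B).card ≤ d := by
    simpa using Finset.card_le_card (Finset.subset_univ (A ∪ B))
  have hint : (A ∩ B).Nonempty := by
    rw [← Finset.card_pos]
    have h2 := Finset.card_union_add_card_inter A B
    have hkr : (k.rev : ℕ) < d := k.rev.isLt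
    omega
  obtain ⟨i, hi⟩ := hint
  obtain ⟨j, hj, hji⟩ := Finset.mem_image.mp (Finset.mem_inter.mp hi).1
  obtain ⟨l, hl, hli⟩ := Finset.mem_image.mp (Finset.mem_inter.mp hi).2
  have h1 : sortDesc x k ≤ x i := by
    rw [← hji]
    exact Tuple.monotone_sort x (Finset.mem_Ici.mp hj)
  have h2 : y i ≤ sortDesc y k := by
    rw [← hli]
    exact Tuple.monotone_sort y (Finset.mem_Iic.mp hl)
  have := hc i
  linarith

/-- The sorting map on `ℝᵈ` is `l∞` 1-Lipschitz:
`‖sort x − sort y‖∞ ≤ ‖x − y‖∞`. (Norm on `Fin d → ℝ` is the sup norm.) -/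
theorem sortDesc_linf_one_lipschitz (d : ℕ) (x y : Fin d → ℝ) :
    ‖sortDesc x - sortDesc y‖ ≤ ‖x - y‖ := by
  have hc : (0:ℝ) ≤ ‖x - y‖ := norm_nonneg _
  rw [pi_norm_le_iff_of_nonneg hc]
  intro k
  rw [Pi.sub_apply, Real.norm_eq_abs, abs_sub_le_iff]
  constructor
  · exact sortDesc_key x y _ (fun i => by
      have := norm_le_pi_norm (x - y) i
      simp [Real.norm_eq_abs, abs_le] at this; linarith [this.2]) k
  · exact sortDesc_key y x _ (fun i => by
      have := norm_le_pi_norm (x - y) i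
      simp [Real.norm_eq_abs, abs_le] at this; linarith [this.1]) k
end
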